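/- arXiv:1506.02152 — 4 statements merged into one kernel-verified Lean document; each statement's English description precedes it below -/
import Mathlib

section
/- Let Λ be a full-rank lattice in ℝⁿ and let 0 < θ ≤ κ. Then the flatness factor is monotone: ε_Λ(κ) ≤ ε_Λ(θ). -/
noncomputable section

/-- The lattice Gaussian sum `g_{z,θ}(L) = Σ_{λ∈L} (2πθ²)^{−n/2}·exp(−‖λ − z‖²/(2θ²))`. -/
def latticeGaussSum {n : ℕ} (L : Set (EuclideanSpace ℝ (Fin n))) (θ : ℝ)
    (z : EuclideanSpace ℝ (Fin n)) : ℝ :=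
  ∑' l : L, (2 * Real.pi * θ ^ 2) ^ (-(n : ℝ) / 2) *
    Real.exp (-‖(l : EuclideanSpace ℝ (Fin n)) - z‖ ^ 2 / (2 * θ ^ 2))

/-- The flatness factor `ε_Λ(θ) = sup_{x∈ℝⁿ} |covol(Λ)·g_{x,θ}(Λ) − 1|` of a full-rank
lattice `Λ`, where `covol(Λ)` is the volume of a fundamental domain of `Λ`. -/
def flatnessFactor {n : ℕ} (Λ : Submodule ℤ (EuclideanSpace ℝ (Fin n))) (θ : ℝ) : ℝ :=
  ⨆ x : EuclideanSpace ℝ (Fin n),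
    |ZLattice.covolume Λ * latticeGaussSum (Λ : Set (EuclideanSpace ℝ (Fin n))) θ x - 1|

/-!
Gaussians form a convolution semigroup: with `s = √(κ² - θ²)`, exchanging the lattice sum with
the integral shows that the Gaussian sum at scale `κ` is the average of the Gaussian sum at scale
`θ` against a Gaussian density of scale `s`. Since that density has total mass one,
`covol · g_{x,κ} - 1` is an average of the values `covol · g_{y,θ} - 1`, hence bounded by their
supremum `ε_Λ(θ)`. The exchange of sum and integral, and the finiteness of the supremum, rest on a
packing bound: the points of a discrete subgroup are centres of disjoint balls of a fixed radius.
-/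

open MeasureTheory Metric Module Real

section GaussianDensity

variable {E : Type*} [NormedAddCommGroup E] [InnerProductSpace ℝ E]

variable (E) in
def gaussianDensity (θ : ℝ) (v : E) : ℝ :=
  (2 * π * θ ^ 2) ^ (-(finrank ℝ E : ℝ) / 2) * exp (-(2 * θ ^ 2)⁻¹ * ‖v‖ ^ 2)

lemma gaussianDensity_pos {θ : ℝ} (hθ : θ ≠ 0) (v : E) : 0 < gaussianDensity E θ v := by
  unfold gaussianDensity
  have := pi_pos
  positivity

lemma norm_sq_div_add_norm_sq_div {θ s κ : ℝ} (hθ : θ ≠ 0) (hs : s ≠ 0)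
    (h : θ ^ 2 + s ^ 2 = κ ^ 2) (u v : E) :
    ‖u‖ ^ 2 / θ ^ 2 + ‖v‖ ^ 2 / s ^ 2 =
      ‖u + v‖ ^ 2 / κ ^ 2 + ‖θ ^ 2 • v - s ^ 2 • u‖ ^ 2 / (θ ^ 2 * s ^ 2 * κ ^ 2) := by
  rw [norm_add_sq_real, norm_sub_sq_real, norm_smul, norm_smul, real_inner_smul_left,
    real_inner_smul_right, real_inner_comm]
  simp only [norm_pow, norm_eq_abs, sq_abs]
  rw [← h]
  field_simp
  ring

lemma gaussianDensity_mul_gaussianDensity {θ s κ : ℝ} (hθ : θ ≠ 0) (hs : s ≠ 0)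
    (h : θ ^ 2 + s ^ 2 = κ ^ 2) (a b y : E) :
    gaussianDensity E θ (a - y) * gaussianDensity E s (y - b) =
      gaussianDensity E κ (a - b) *
        gaussianDensity E (θ * s / κ) (y - ((s ^ 2 / κ ^ 2) • a + (θ ^ 2 / κ ^ 2) • b)) := by
  have hκ : κ ^ 2 ≠ 0 := by rw [← h]; positivity
  have hκ₀ : κ ≠ 0 := (pow_ne_zero_iff two_ne_zero).1 hκ
  have hy : y - ((s ^ 2 / κ ^ 2) • a + (θ ^ 2 / κ ^ 2) • b) =
      (κ ^ 2)⁻¹ • (θ ^ 2 • (y - b) - s ^ 2 • (a - y)) := by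
    rw [eq_inv_smul_iff₀ hκ, smul_sub, smul_add, smul_smul, smul_smul, mul_div_cancel₀ _ hκ,
      mul_div_cancel₀ _ hκ, ← h]
    module
  have hconst : (2 * π * θ ^ 2) ^ (-(finrank ℝ E : ℝ) / 2) *
      (2 * π * s ^ 2) ^ (-(finrank ℝ E : ℝ) / 2) = (2 * π * κ ^ 2) ^ (-(finrank ℝ E : ℝ) / 2) *
        (2 * π * (θ * s / κ) ^ 2) ^ (-(finrank ℝ E : ℝ) / 2) := by
    rw [← mul_rpow (by positivity) (by positivity), ← mul_rpow (by positivity) (by positivity)]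
    congr 1
    field_simp
  have hexp : -(2 * θ ^ 2)⁻¹ * ‖a - y‖ ^ 2 + -(2 * s ^ 2)⁻¹ * ‖y - b‖ ^ 2 =
      -(2 * κ ^ 2)⁻¹ * ‖a - b‖ ^ 2 + -(2 * (θ * s / κ) ^ 2)⁻¹ *
        ‖(κ ^ 2)⁻¹ • (θ ^ 2 • (y - b) - s ^ 2 • (a - y))‖ ^ 2 := by
    have hquad := norm_sq_div_add_norm_sq_div hθ hs h (a - y) (y - b)
    rw [sub_add_sub_cancel] at hquad
    rw [norm_smul, mul_pow, norm_inv, norm_pow, norm_eq_abs, sq_abs]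
    field_simp
    field_simp at hquad
    linear_combination -hquad
  rw [hy]
  simp only [gaussianDensity]
  rw [mul_mul_mul_comm, ← exp_add, mul_mul_mul_comm _ (exp _), ← exp_add, hconst, hexp]

variable [FiniteDimensional ℝ E] [MeasurableSpace E] [BorelSpace E]

lemma integral_gaussianDensity {θ : ℝ} (hθ : θ ≠ 0) : ∫ v, gaussianDensity E θ v = 1 := by
  have hc : 0 < 2 * π * θ ^ 2 := by have := pi_pos; positivity
  simp only [gaussianDensity]
  rw [integral_const_mul, GaussianFourier.integral_rexp_neg_mul_sq_norm (by positivity), neg_div,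
    rpow_neg hc.le, show π / (2 * θ ^ 2)⁻¹ = 2 * π * θ ^ 2 by field_simp]
  exact inv_mul_cancel₀ (rpow_pos_of_pos hc _).ne'

lemma integrable_gaussianDensity {θ : ℝ} (hθ : θ ≠ 0) : Integrable (gaussianDensity E θ) :=
  Integrable.of_integral_ne_zero (by rw [integral_gaussianDensity hθ]; exact one_ne_zero)

lemma integral_gaussianDensity_mul_gaussianDensity {θ s κ : ℝ} (hθ : θ ≠ 0) (hs : s ≠ 0)
    (h : θ ^ 2 + s ^ 2 = κ ^ 2) (a b : E) :
    ∫ y, gaussianDensity E θ (a - y) * gaussianDensity E s (y - b) = gaussianDensity E κ (a - b) := by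
  have hκ : κ ≠ 0 := (pow_ne_zero_iff two_ne_zero).1 (by rw [← h]; positivity)
  simp only [gaussianDensity_mul_gaussianDensity hθ hs h a b]
  rw [integral_const_mul, integral_sub_right_eq_self (gaussianDensity E (θ * s / κ)),
    integral_gaussianDensity (by positivity), mul_one]

end GaussianDensity

lemma abs_integral_mul_le_of_abs_le {α : Type*} [MeasurableSpace α] {μ : Measure α} {f k : α → ℝ}
    {M : ℝ} (hk : ∀ y, 0 ≤ k y) (hk₁ : ∫ y, k y ∂μ = 1) (hf : ∀ y, |f y| ≤ M) :
    |∫ y, f y * k y ∂μ| ≤ M := by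
  have hk_int : Integrable k μ :=
    Integrable.of_integral_ne_zero (by rw [hk₁]; exact one_ne_zero)
  calc |∫ y, f y * k y ∂μ| ≤ ∫ y, M * k y ∂μ := by
        rw [← norm_eq_abs]
        refine norm_integral_le_of_norm_le (hk_int.const_mul M) (ae_of_all _ fun y => ?_)
        rw [norm_mul, norm_eq_abs, norm_eq_abs, abs_of_nonneg (hk y)]
        exact mul_le_mul_of_nonneg_right (hf y) (hk y)
    _ = M := by rw [integral_const_mul, hk₁, mul_one]

section GaussianSum

variable {E : Type*} [NormedAddCommGroup E] [InnerProductSpace ℝ E]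

variable (E) in
def gaussianSum (S : Set E) (θ : ℝ) (x : E) : ℝ :=
  ∑' a : S, gaussianDensity E θ (a - x)

variable [FiniteDimensional ℝ E] [MeasurableSpace E] [BorelSpace E] {S : Set E}

lemma integral_gaussianSum_mul_gaussianDensity {θ s κ : ℝ} (hθ : θ ≠ 0) (hs : s ≠ 0)
    (h : θ ^ 2 + s ^ 2 = κ ^ 2) {x : E}
    (hsum : Summable fun a : S => gaussianDensity E κ (a - x)) :
    ∫ y, gaussianSum E S θ y * gaussianDensity E s (y - x) = gaussianSum E S κ x := by
  have hκ : κ ≠ 0 := (pow_ne_zero_iff two_ne_zero).1 (by rw [← h]; positivity)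
  have hterm (a : S) : ∫ y, gaussianDensity E θ (a - y) * gaussianDensity E s (y - x) =
      gaussianDensity E κ (a - x) :=
    integral_gaussianDensity_mul_gaussianDensity hθ hs h (a : E) x
  have hnorm (a : S) : ∫ y, ‖gaussianDensity E θ (a - y) * gaussianDensity E s (y - x)‖ =
      gaussianDensity E κ (a - x) := by
    simp only [norm_of_nonneg (mul_pos (gaussianDensity_pos hθ _) (gaussianDensity_pos hs _)).le,
      hterm]
  have : Countable S := by
    have := hsum.countable_support
    rwa [Function.support_eq_univ fun a => (gaussianDensity_pos hκ _).ne',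
      Set.countable_univ_iff] at this
  simp only [gaussianSum, ← tsum_mul_right]
  rw [← integral_tsum_of_summable_integral_norm
    (fun a => Integrable.of_integral_ne_zero (by rw [hterm]; exact (gaussianDensity_pos hκ _).ne'))
    (by simpa only [hnorm] using hsum)]
  exact tsum_congr hterm

lemma integrable_gaussianSum_mul_gaussianDensity {θ s κ : ℝ} (hθ : θ ≠ 0) (hs : s ≠ 0)
    (h : θ ^ 2 + s ^ 2 = κ ^ 2) {x : E}
    (hsum : Summable fun a : S => gaussianDensity E κ (a - x)) :
    Integrable fun y => gaussianSum E S θ y * gaussianDensity E s (y - x) := by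
  have hκ : κ ≠ 0 := (pow_ne_zero_iff two_ne_zero).1 (by rw [← h]; positivity)
  rcases S.eq_empty_or_nonempty with rfl | ⟨a, ha⟩
  · simp [gaussianSum]
  refine Integrable.of_integral_ne_zero ?_
  rw [integral_gaussianSum_mul_gaussianDensity hθ hs h hsum]
  exact (hsum.tsum_pos (fun _ => (gaussianDensity_pos hκ _).le) ⟨a, ha⟩
    (gaussianDensity_pos hκ _)).ne'

theorem abs_mul_gaussianSum_sub_one_le {θ κ c M : ℝ} (hθ : 0 < θ) (hθκ : θ ≤ κ) {x : E}
    (hsum : Summable fun a : S => gaussianDensity E κ (a - x))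
    (hM : ∀ y, |c * gaussianSum E S θ y - 1| ≤ M) :
    |c * gaussianSum E S κ x - 1| ≤ M := by
  obtain rfl | hlt := hθκ.eq_or_lt
  · exact hM x
  set s := √(κ ^ 2 - θ ^ 2)
  have hs : s ≠ 0 := (sqrt_pos.2 (by nlinarith)).ne'
  have h : θ ^ 2 + s ^ 2 = κ ^ 2 := by rw [sq_sqrt (by nlinarith)]; ring
  have hk₁ : ∫ y, gaussianDensity E s (y - x) = 1 := by
    rw [integral_sub_right_eq_self (gaussianDensity E s), integral_gaussianDensity hs]
  have hsmooth : ∫ y, (c * gaussianSum E S θ y - 1) * gaussianDensity E s (y - x) =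
      c * gaussianSum E S κ x - 1 := by
    simp only [sub_mul, one_mul, mul_assoc]
    rw [integral_sub ((integrable_gaussianSum_mul_gaussianDensity hθ.ne' hs h hsum).const_mul c)
        ((integrable_gaussianDensity hs).comp_sub_right x), integral_const_mul,
      integral_gaussianSum_mul_gaussianDensity hθ.ne' hs h hsum, hk₁]
  rw [← hsmooth]
  exact abs_integral_mul_le_of_abs_le (fun y => (gaussianDensity_pos hs _).le) hk₁ hM

end GaussianSum

lemma exp_neg_mul_norm_sub_sq_mul_le {E : Type*} [SeminormedAddCommGroup E] {p r : ℝ}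
    (hp : 0 < p) {a w x : E} (hw : w ∈ closedBall a r) :
    exp (-p * ‖a - x‖ ^ 2) * exp (-(p * r ^ 2)) ≤ exp (-(p / 2) * ‖w - x‖ ^ 2) := by
  rw [← exp_add, exp_le_exp]
  have hwa : ‖w - a‖ ≤ r := mem_closedBall_iff_norm.1 hw
  have htri : ‖w - x‖ ≤ ‖w - a‖ + ‖a - x‖ := norm_sub_le_norm_sub_add_norm_sub w a x
  have hsq : ‖w - x‖ ^ 2 ≤ 2 * ‖a - x‖ ^ 2 + 2 * r ^ 2 := by
    nlinarith [norm_nonneg (w - a), norm_nonneg (w - x), sq_nonneg (‖w - a‖ - ‖a - x‖)]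
  nlinarith [mul_le_mul_of_nonneg_left hsq hp.le]

section Packing

variable {E : Type*} [NormedAddCommGroup E] [InnerProductSpace ℝ E] [FiniteDimensional ℝ E]
  [MeasurableSpace E] [BorelSpace E]

/-- Each term is dominated by the integral of a wider Gaussian over a ball around its point, and
the balls are disjoint. -/
lemma sum_exp_neg_mul_norm_sub_sq_mul_le {S : Set E} {p r : ℝ} (hp : 0 < p)
    (hS : S.PairwiseDisjoint (closedBall · r)) (x : E) (F : Finset S) :
    (∑ a ∈ F, exp (-p * ‖(a : E) - x‖ ^ 2)) *
        (volume.real (closedBall (0 : E) r) * exp (-(p * r ^ 2))) ≤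
      (π / (p / 2)) ^ (finrank ℝ E / 2 : ℝ) := by
  set g : E → ℝ := fun w => exp (-(p / 2) * ‖w - x‖ ^ 2)
  have hg₀ : ∫ w : E, exp (-(p / 2) * ‖w‖ ^ 2) = (π / (p / 2)) ^ (finrank ℝ E / 2 : ℝ) :=
    GaussianFourier.integral_rexp_neg_mul_sq_norm (half_pos hp)
  have hg : Integrable g :=
    (Integrable.of_integral_ne_zero (by rw [hg₀]; positivity)).comp_sub_right x
  have hball (a : S) : exp (-p * ‖(a : E) - x‖ ^ 2) *
      (volume.real (closedBall (0 : E) r) * exp (-(p * r ^ 2))) ≤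
        ∫ w in closedBall (a : E) r, g w := by
    rw [mul_comm (volume.real _), ← mul_assoc,
      ← Measure.addHaar_real_closedBall_center volume (a : E)]
    exact setIntegral_ge_of_const_le_real measurableSet_closedBall measure_closedBall_lt_top.ne
      (fun w hw => exp_neg_mul_norm_sub_sq_mul_le hp hw) hg.integrableOn
  calc _ = ∑ a ∈ F, exp (-p * ‖(a : E) - x‖ ^ 2) *
        (volume.real (closedBall (0 : E) r) * exp (-(p * r ^ 2))) := Finset.sum_mul ..
    _ ≤ ∑ a ∈ F, ∫ w in closedBall (a : E) r, g w := Finset.sum_le_sum fun a _ => hball a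
    _ = ∫ w in ⋃ a ∈ F, closedBall (a : E) r, g w :=
        (integral_biUnion_finset F (fun _ _ => measurableSet_closedBall)
          (fun a _ b _ hab => hS a.2 b.2 (Subtype.coe_ne_coe.2 hab))
          (fun _ _ => hg.integrableOn)).symm
    _ ≤ ∫ w, g w := setIntegral_le_integral hg (ae_of_all _ fun w => (exp_pos _).le)
    _ = (π / (p / 2)) ^ (finrank ℝ E / 2 : ℝ) := by
        rw [integral_sub_right_eq_self (fun w => exp (-(p / 2) * ‖w‖ ^ 2)) x, hg₀]

lemma exists_sum_gaussianDensity_sub_le {S : Set E} {θ r : ℝ} (hθ : θ ≠ 0) (hr : 0 < r)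
    (hS : S.PairwiseDisjoint (closedBall · r)) :
    ∃ C, ∀ (x : E) (F : Finset S), ∑ a ∈ F, gaussianDensity E θ (a - x) ≤ C := by
  set p : ℝ := (2 * θ ^ 2)⁻¹
  have hp : 0 < p := by positivity
  have hD : 0 < volume.real (closedBall (0 : E) r) * exp (-(p * r ^ 2)) :=
    mul_pos (ENNReal.toReal_pos (measure_closedBall_pos volume 0 hr).ne'
      measure_closedBall_lt_top.ne) (exp_pos _)
  refine ⟨(2 * π * θ ^ 2) ^ (-(finrank ℝ E : ℝ) / 2) *
    ((π / (p / 2)) ^ (finrank ℝ E / 2 : ℝ) / (volume.real (closedBall (0 : E) r) *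
      exp (-(p * r ^ 2)))), fun x F => ?_⟩
  simp only [gaussianDensity, ← Finset.mul_sum]
  gcongr
  rw [le_div_iff₀ hD]
  exact sum_exp_neg_mul_norm_sub_sq_mul_le hp hS x F

lemma summable_gaussianDensity_sub {S : Set E} {θ r : ℝ} (hθ : θ ≠ 0) (hr : 0 < r)
    (hS : S.PairwiseDisjoint (closedBall · r)) (x : E) :
    Summable fun a : S => gaussianDensity E θ (a - x) := by
  obtain ⟨C, hC⟩ := exists_sum_gaussianDensity_sub_le hθ hr hS
  exact summable_of_sum_le (fun a => (gaussianDensity_pos hθ _).le) (hC x)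

lemma bddAbove_range_abs_mul_gaussianSum_sub_one {S : Set E} {θ r : ℝ} (hθ : θ ≠ 0) (hr : 0 < r)
    (hS : S.PairwiseDisjoint (closedBall · r)) (c : ℝ) :
    BddAbove (Set.range fun x => |c * gaussianSum E S θ x - 1|) := by
  obtain ⟨C, hC⟩ := exists_sum_gaussianDensity_sub_le hθ hr hS
  refine ⟨|c| * C + 1, Set.forall_mem_range.2 fun x => ?_⟩
  have hG₀ : 0 ≤ gaussianSum E S θ x := tsum_nonneg fun a => (gaussianDensity_pos hθ _).le
  have hG : gaussianSum E S θ x ≤ C :=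
    (summable_gaussianDensity_sub hθ hr hS x).tsum_le_of_sum_le (hC x)
  calc |c * gaussianSum E S θ x - 1| ≤ |c * gaussianSum E S θ x| + |1| := abs_sub _ _
    _ ≤ |c| * C + 1 := by rw [abs_mul, abs_of_nonneg hG₀, abs_one]; gcongr

end Packing

lemma Submodule.exists_pairwiseDisjoint_closedBall {E : Type*} [NormedAddCommGroup E]
    (L : Submodule ℤ E) [DiscreteTopology L] :
    ∃ r > 0, (L : Set E).PairwiseDisjoint (closedBall · r) := by
  obtain ⟨ε, hε, hsep⟩ := isOpen_singleton_iff.1 (isOpen_discrete ({0} : Set L))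
  refine ⟨ε / 3, by positivity, fun a ha b hb hab => closedBall_disjoint_closedBall ?_⟩
  by_contra! hle
  have : (⟨a - b, L.sub_mem ha hb⟩ : L) = 0 := hsep _ <| by
    rw [Subtype.dist_eq, Submodule.coe_zero, dist_zero_right, ← dist_eq_norm]
    linarith
  exact hab (sub_eq_zero.1 (congrArg Subtype.val this))

lemma latticeGaussSum_eq_gaussianSum {n : ℕ} (L : Set (EuclideanSpace ℝ (Fin n))) (θ : ℝ)
    (z : EuclideanSpace ℝ (Fin n)) :
    latticeGaussSum L θ z = gaussianSum (EuclideanSpace ℝ (Fin n)) L θ z := by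
  simp only [latticeGaussSum, gaussianSum, gaussianDensity, finrank_euclideanSpace_fin]
  congr 1 with l
  ring_nf

theorem stmt_9_general {n : ℕ} (Λ : Submodule ℤ (EuclideanSpace ℝ (Fin n)))
    [DiscreteTopology Λ] (θ κ : ℝ) (hθ : 0 < θ) (hθκ : θ ≤ κ) :
    flatnessFactor Λ κ ≤ flatnessFactor Λ θ := by
  obtain ⟨r, hr, hΛ⟩ := Λ.exists_pairwiseDisjoint_closedBall
  simp only [flatnessFactor, latticeGaussSum_eq_gaussianSum]
  exact ciSup_le fun x => abs_mul_gaussianSum_sub_one_le hθ hθκ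
    (summable_gaussianDensity_sub (hθ.trans_le hθκ).ne' hr hΛ x)
    (le_ciSup (bddAbove_range_abs_mul_gaussianSum_sub_one hθ.ne' hr hΛ _))

/-- Let `Λ` be a full-rank lattice in `ℝⁿ` and let `0 < θ ≤ κ`. Then the
flatness factor is monotone: `ε_Λ(κ) ≤ ε_Λ(θ)`. -/
theorem stmt_9 {n : ℕ} (Λ : Submodule ℤ (EuclideanSpace ℝ (Fin n)))
    [DiscreteTopology Λ] [IsZLattice ℝ Λ] (θ κ : ℝ) (hθ : 0 < θ) (hθκ : θ ≤ κ) :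
    flatnessFactor Λ κ ≤ flatnessFactor Λ θ :=
  stmt_9_general Λ θ κ hθ hθκ
end
end

section
/- Let Λ be a full-rank lattice in ℝⁿ and θ > 0. Then for every z ∈ ℝⁿ, the lattice Gaussian sum is maximized at a lattice point: g_{z,θ}(Λ) ≤ g_{0,θ}(Λ), i.e., Σ_{λ∈Λ} exp(−‖λ − z‖²/(2θ²)) ≤ Σ_{λ∈Λ} exp(−‖λ‖²/(2θ²)). -/
noncomputable section

/-!
The Gaussian `e^{-a‖x‖²}` is, up to a constant `C > 0`, the autocorrelation
`∫ h(y) h(y + x) dy` of `h = e^{-2a‖·‖²}`. Summing over the lattice and folding the integral onto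
a fundamental domain `F` gives `C Σ_λ e^{-a‖λ - z‖²} = ∫_F H(y) H(y - z) dy`, where `H` is the
periodization of `h`. As `∫_F H(y - z)² dy = ∫_F H(y)² dy`, the pointwise AM-GM inequality
`2 H(y) H(y - z) ≤ H(y)² + H(y - z)²` bounds this by its value at `z = 0`.
-/

open MeasureTheory ENNReal

theorem ENNReal.two_mul_le_add_sq (a b : ℝ≥0∞) : 2 * a * b ≤ a ^ 2 + b ^ 2 := by
  induction a with
  | top => simp [top_pow two_ne_zero]
  | coe a =>
    induction b with
    | top => simp [top_pow two_ne_zero]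
    | coe b => exact_mod_cast _root_.two_mul_le_add_sq a b

section Periodization

variable {E : Type*} [AddCommGroup E] (G : AddSubgroup E)

def periodization (h : E → ℝ≥0∞) (w : E) : ℝ≥0∞ := ∑' g : G, h (w + g)

variable {G} {h : E → ℝ≥0∞}

theorem periodization_vadd (g : G) (w : E) :
    periodization G h (g +ᵥ w) = periodization G h w :=
  (tsum_congr fun c ↦ by simp [AddSubgroup.vadd_def, add_comm, add_left_comm]).trans
    ((Equiv.addLeft g).tsum_eq _)

theorem periodization_vadd_sub (g : G) (w z : E) :
    periodization G h ((g +ᵥ w) - z) = periodization G h (w - z) := by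
  rw [AddSubgroup.vadd_def, vadd_eq_add, add_sub_assoc, ← vadd_eq_add, ← AddSubgroup.vadd_def,
    periodization_vadd]

theorem periodization_comp_sub_const (z w : E) :
    periodization G (fun y ↦ h (y - z)) w = periodization G h (w - z) := by
  simp only [periodization, sub_add_eq_add_sub]

variable [MeasurableSpace E] [MeasurableAdd E] [Countable G]

theorem measurable_periodization (hh : Measurable h) : Measurable (periodization G h) :=
  .tsum fun _ ↦ hh.comp (measurable_add_const _)

variable {μ : Measure E} [μ.IsAddLeftInvariant] {F : Set E}

theorem lintegral_mul_periodic_eq_setLIntegral (hF : IsAddFundamentalDomain G F μ)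
    {f P : E → ℝ≥0∞} (hf : Measurable f) (hP : Measurable P)
    (hper : ∀ (g : G) w, P (g +ᵥ w) = P w) :
    ∫⁻ y, f y * P y ∂μ = ∫⁻ y in F, periodization G f y * P y ∂μ := by
  rw [hF.lintegral_eq_tsum'']
  simp_rw [hper, AddSubgroup.vadd_def, vadd_eq_add, add_comm (_ : E) (_ : E), periodization,
    ← ENNReal.tsum_mul_right]
  exact (lintegral_tsum fun g ↦ ((hf.comp (measurable_add_const _)).mul hP).aemeasurable).symm

theorem tsum_lintegral_mul_add_sub_eq (hF : IsAddFundamentalDomain G F μ) (hh : Measurable h)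
    (z : E) :
    ∑' g : G, ∫⁻ y, h y * h (y + g - z) ∂μ =
      ∫⁻ y in F, periodization G h y * periodization G h (y - z) ∂μ := by
  have hterm : ∀ g : G, Measurable fun y ↦ h y * h (y + g - z) := fun g ↦
    hh.mul (hh.comp ((measurable_sub_const' z).comp (measurable_add_const _)))
  rw [← lintegral_tsum fun g ↦ (hterm g).aemeasurable,
    ← lintegral_mul_periodic_eq_setLIntegral (P := fun y ↦ periodization G h (y - z)) hF hh
      ((measurable_periodization hh).comp (measurable_sub_const' z))
      fun g w ↦ periodization_vadd_sub g w z]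
  simp only [ENNReal.tsum_mul_left, periodization, sub_add_eq_add_sub]

theorem setLIntegral_periodization_sub_sq (hF : IsAddFundamentalDomain G F μ)
    (hh : Measurable h) (z : E) :
    ∫⁻ y in F, periodization G h (y - z) ^ 2 ∂μ = ∫⁻ y in F, periodization G h y ^ 2 ∂μ := by
  have hH := measurable_periodization (G := G) hh
  calc ∫⁻ y in F, periodization G h (y - z) ^ 2 ∂μ
      = ∫⁻ y, h (y - z) * periodization G h (y - z) ∂μ := by
        rw [lintegral_mul_periodic_eq_setLIntegral (f := fun y ↦ h (y - z))
          (P := fun y ↦ periodization G h (y - z)) hF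
          (hh.comp (measurable_sub_const' z)) (hH.comp (measurable_sub_const' z))
          fun g w ↦ periodization_vadd_sub g w z]
        simp only [periodization_comp_sub_const, sq]
    _ = ∫⁻ y, h y * periodization G h y ∂μ :=
        lintegral_sub_right_eq_self (fun y ↦ h y * periodization G h y) z
    _ = ∫⁻ y in F, periodization G h y ^ 2 ∂μ := by
        rw [lintegral_mul_periodic_eq_setLIntegral hF hh hH periodization_vadd]
        simp only [sq]

theorem tsum_lintegral_mul_add_sub_le (hF : IsAddFundamentalDomain G F μ) (hh : Measurable h)
    (z : E) :
    ∑' g : G, ∫⁻ y, h y * h (y + g - z) ∂μ ≤ ∑' g : G, ∫⁻ y, h y * h (y + g) ∂μ := by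
  set H := periodization G h
  have hH : Measurable H := measurable_periodization hh
  have hfold₀ : ∑' g : G, ∫⁻ y, h y * h (y + g) ∂μ = ∫⁻ y in F, H y ^ 2 ∂μ := by
    simpa only [sub_zero, sq] using tsum_lintegral_mul_add_sub_eq hF hh 0
  rw [tsum_lintegral_mul_add_sub_eq hF hh z, hfold₀]
  refine (ENNReal.mul_le_mul_iff_right two_ne_zero ofNat_ne_top).mp ?_
  calc 2 * ∫⁻ y in F, H y * H (y - z) ∂μ = ∫⁻ y in F, 2 * H y * H (y - z) ∂μ := by
        simp_rw [mul_assoc]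
        exact (lintegral_const_mul _ (hH.mul (hH.comp (measurable_sub_const' z)))).symm
    _ ≤ ∫⁻ y in F, H y ^ 2 + H (y - z) ^ 2 ∂μ :=
        lintegral_mono fun y ↦ ENNReal.two_mul_le_add_sq _ _
    _ = 2 * ∫⁻ y in F, H y ^ 2 ∂μ := by
        rw [lintegral_add_left (hH.pow_const 2), setLIntegral_periodization_sub_sq hF hh z,
          two_mul]

end Periodization

section Gaussian

variable {V : Type*} [NormedAddCommGroup V]

def ennGaussian (a : ℝ) (x : V) : ℝ≥0∞ := ENNReal.ofReal (Real.exp (-a * ‖x‖ ^ 2))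

theorem measurable_ennGaussian [MeasurableSpace V] [BorelSpace V] (a : ℝ) :
    Measurable (ennGaussian a : V → ℝ≥0∞) := by
  unfold ennGaussian; fun_prop

variable [InnerProductSpace ℝ V]

theorem norm_sq_add_norm_add_sq (x y : V) :
    ‖y‖ ^ 2 + ‖y + x‖ ^ 2 = 2 * ‖y + (2⁻¹ : ℝ) • x‖ ^ 2 + ‖x‖ ^ 2 / 2 := by
  simp only [norm_add_sq_real, inner_smul_right, norm_smul, mul_pow, Real.norm_eq_abs,
    abs_of_pos (by norm_num : (0 : ℝ) < 2⁻¹)]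
  ring

theorem ennGaussian_mul_ennGaussian_add (a : ℝ) (x y : V) :
    ennGaussian (2 * a) y * ennGaussian (2 * a) (y + x) =
      ennGaussian (4 * a) (y + (2⁻¹ : ℝ) • x) * ennGaussian a x := by
  simp only [ennGaussian, ← ENNReal.ofReal_mul (Real.exp_nonneg _), ← Real.exp_add]
  congr 2
  linear_combination (-2 * a) * norm_sq_add_norm_add_sq x y

variable [MeasurableSpace V] [BorelSpace V]

theorem lintegral_ennGaussian_mul_ennGaussian_add (μ : Measure V) [μ.IsAddRightInvariant]
    (a : ℝ) (x : V) :
    ∫⁻ y, ennGaussian (2 * a) y * ennGaussian (2 * a) (y + x) ∂μ =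
      (∫⁻ y, ennGaussian (4 * a) y ∂μ) * ennGaussian a x := by
  simp_rw [ennGaussian_mul_ennGaussian_add]
  rw [lintegral_mul_const' (ennGaussian a x) _ ofReal_ne_top, lintegral_add_right_eq_self]

variable [FiniteDimensional ℝ V]

theorem lintegral_ennGaussian_ne_zero (a : ℝ) : ∫⁻ x : V, ennGaussian a x ≠ 0 := by
  rw [Ne, lintegral_eq_zero_iff (measurable_ennGaussian a)]
  intro h
  obtain ⟨x, hx⟩ := h.exists
  simp only [ennGaussian, Pi.zero_apply, ENNReal.ofReal_eq_zero] at hx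
  exact (Real.exp_pos _).not_ge hx

theorem lintegral_ennGaussian_ne_top {a : ℝ} (ha : 0 < a) : ∫⁻ x : V, ennGaussian a x ≠ ⊤ := by
  have := (GaussianFourier.integrable_cexp_neg_mul_sq_norm_add (V := V) (b := a)
    (by simpa using ha) 0 0).norm
  refine ((this.congr (.of_forall fun x ↦ ?_)).lintegral_lt_top).ne
  simp [Complex.norm_exp, ← Complex.ofReal_pow]

end Gaussian

open Module Nat Filter in
theorem ZLattice.summable_exp_neg_mul_sq_norm {E : Type*} [NormedAddCommGroup E]
    [NormedSpace ℝ E] [FiniteDimensional ℝ E] (L : Submodule ℤ E) [DiscreteTopology L] {a : ℝ}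
    (ha : 0 < a) :
    Summable fun l : L ↦ Real.exp (-a * ‖(l : E)‖ ^ 2) := by
  set k := finrank ℤ L + 1
  refine .of_norm_bounded_eventually
    ((ZLattice.summable_norm_pow_inv L (2 * k) (by omega)).mul_left (k ! / a ^ k)) ?_
  filter_upwards [eventually_cofinite_ne 0] with l hl
  have ht : 0 < ‖(l : E)‖ := by simpa using hl
  have hnorm : ‖l‖ = ‖(l : E)‖ := rfl
  have hexp := Real.pow_div_factorial_le_exp (a * ‖(l : E)‖ ^ 2) (by positivity) k
  rw [Real.norm_of_nonneg (Real.exp_nonneg _), neg_mul, Real.exp_neg]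
  calc (Real.exp (a * ‖(l : E)‖ ^ 2))⁻¹ ≤ ((a * ‖(l : E)‖ ^ 2) ^ k / k !)⁻¹ :=
        inv_anti₀ (by positivity) hexp
    _ = k ! / a ^ k * ‖l‖⁻¹ ^ (2 * k) := by
        rw [hnorm, inv_pow, mul_pow, ← pow_mul, mul_comm 2 k]
        field_simp

section Lattice

variable {V : Type*} [NormedAddCommGroup V] [InnerProductSpace ℝ V] [FiniteDimensional ℝ V]
  [MeasurableSpace V] [BorelSpace V] (L : Submodule ℤ V) [DiscreteTopology L] [IsZLattice ℝ L]
  {a : ℝ}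

theorem ZLattice.tsum_ennGaussian_sub_le (ha : 0 < a) (z : V) :
    ∑' l : L, ennGaussian a ((l : V) - z) ≤ ∑' l : L, ennGaussian a (l : V) := by
  have hF : IsAddFundamentalDomain L.toAddSubgroup _ volume :=
    ZLattice.isAddFundamentalDomain (Module.Free.chooseBasis ℤ L) volume
  have : Countable L.toAddSubgroup := inferInstanceAs (Countable L)
  have hconv : ∀ w : V,
      (∫⁻ y : V, ennGaussian (4 * a) y) * ∑' l : L, ennGaussian a ((l : V) - w) =
        ∑' l : L.toAddSubgroup, ∫⁻ y, ennGaussian (2 * a) y * ennGaussian (2 * a) (y + l - w) := by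
    intro w
    rw [← ENNReal.tsum_mul_left]
    refine tsum_congr fun l ↦ ?_
    simp_rw [add_sub_assoc]
    exact (lintegral_ennGaussian_mul_ennGaussian_add _ a _).symm
  have hconv₀ := hconv 0
  simp only [sub_zero] at hconv₀
  refine (ENNReal.mul_le_mul_iff_right (lintegral_ennGaussian_ne_zero (V := V) (4 * a))
    (lintegral_ennGaussian_ne_top (by linarith))).mp ?_
  rw [hconv z, hconv₀]
  exact tsum_lintegral_mul_add_sub_le hF (measurable_ennGaussian _) z

theorem ZLattice.tsum_exp_neg_mul_sq_norm_sub_le (ha : 0 < a) (z : V) :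
    ∑' l : L, Real.exp (-a * ‖(l : V) - z‖ ^ 2) ≤ ∑' l : L, Real.exp (-a * ‖(l : V)‖ ^ 2) := by
  have hfin : ∑' l : L, ennGaussian a (l : V) ≠ ⊤ := by
    simp only [ennGaussian]
    rw [← ENNReal.ofReal_tsum_of_nonneg (fun _ ↦ Real.exp_nonneg _)
      (ZLattice.summable_exp_neg_mul_sq_norm L ha)]
    exact ofReal_ne_top
  simpa only [ennGaussian, ENNReal.tsum_toReal_eq fun _ ↦ ofReal_ne_top,
    ENNReal.toReal_ofReal (Real.exp_nonneg _)]
    using ENNReal.toReal_mono hfin (ZLattice.tsum_ennGaussian_sub_le L ha z)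

end Lattice

/-- Let `Λ` be a full-rank lattice in `ℝⁿ` and `θ > 0`. Then for every
`z ∈ ℝⁿ` the lattice Gaussian sum is maximized at a lattice point: `g_{z,θ}(Λ) ≤ g_{0,θ}(Λ)`. -/
theorem stmt_10 {n : ℕ} (Λ : Submodule ℤ (EuclideanSpace ℝ (Fin n)))
    [DiscreteTopology Λ] [IsZLattice ℝ Λ] (θ : ℝ) (hθ : 0 < θ) :
    ∀ z : EuclideanSpace ℝ (Fin n),
      latticeGaussSum (Λ : Set (EuclideanSpace ℝ (Fin n))) θ z ≤
        latticeGaussSum (Λ : Set (EuclideanSpace ℝ (Fin n))) θ 0 := by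
  intro z
  have ha : 0 < (2 * θ ^ 2)⁻¹ := by positivity
  have hexp : ∀ x : EuclideanSpace ℝ (Fin n),
      Real.exp (-‖x‖ ^ 2 / (2 * θ ^ 2)) = Real.exp (-(2 * θ ^ 2)⁻¹ * ‖x‖ ^ 2) := fun x ↦ by
    ring_nf
  simp only [latticeGaussSum, tsum_mul_left, hexp]
  refine mul_le_mul_of_nonneg_left ?_ (Real.rpow_nonneg (by positivity) _)
  simpa using ZLattice.tsum_exp_neg_mul_sq_norm_sub_le Λ ha z

end
end

section
/- Let L' ⊆ L be nested lattices in ℝⁿ, let h1, h2 be nonzero integers, and assume that for every λ ∈ L with λ ∉ L', h2·λ ∉ L'. Let V(L) = {x ∈ ℝⁿ : ‖x‖ ≤ ‖x − μ‖ for all μ ∈ L} be the Voronoi region of L, and let C denote the interior of (2/(|h1|+|h2|))·V(L). Then for every λ1 ∈ L \ L', λ2 ∈ L', and t1, t2 ∈ C, one has (t1 − λ1)/|h1| ≠ (t2 − λ2)/|h2|; equivalently, the sets (C − λ1)/|h1| and (C − λ2)/|h2| are disjoint. -/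
open scoped Pointwise RealInnerProductSpace

set_option maxHeartbeats 400000

/-- Let `L' ⊆ L` be nested lattices in `ℝⁿ`, let `h₁, h₂` be nonzero integers,
and assume that `h₂·λ ∉ L'` for every `λ ∈ L \ L'`. Let `V(L)` be the (closed) Voronoi region of
`L` and let `C` be the interior of `(2/(|h₁|+|h₂|))·V(L)`. Then for every `λ₁ ∈ L \ L'`,
`λ₂ ∈ L'` and `t₁, t₂ ∈ C` one has `(t₁ − λ₁)/|h₁| ≠ (t₂ − λ₂)/|h₂|`; equivalently, the sets
`(C − λ₁)/|h₁|` and `(C − λ₂)/|h₂|` are disjoint. -/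
theorem stmt_13 {n : ℕ} (L L' : AddSubgroup (EuclideanSpace ℝ (Fin n)))
    [DiscreteTopology L] [DiscreteTopology L'] (hle : L' ≤ L)
    (h₁ h₂ : ℤ) (hh₁ : h₁ ≠ 0) (hh₂ : h₂ ≠ 0)
    (horder : ∀ l ∈ L, l ∉ L' → h₂ • l ∉ L') :
    ∀ l₁ ∈ L, l₁ ∉ L' → ∀ l₂ ∈ L',
      ∀ t₁ ∈ interior ((2 / (|(h₁ : ℝ)| + |(h₂ : ℝ)|)) •
          {x : EuclideanSpace ℝ (Fin n) | ∀ μ ∈ L, ‖x‖ ≤ ‖x - μ‖}),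
        ∀ t₂ ∈ interior ((2 / (|(h₁ : ℝ)| + |(h₂ : ℝ)|)) •
            {x : EuclideanSpace ℝ (Fin n) | ∀ μ ∈ L, ‖x‖ ≤ ‖x - μ‖}),
          |(h₁ : ℝ)|⁻¹ • (t₁ - l₁) ≠ |(h₂ : ℝ)|⁻¹ • (t₂ - l₂) := by
  intro l₁ hl₁ hl₁' l₂ hl₂ t₁ ht₁ t₂ ht₂ heq
  set V : Set (EuclideanSpace ℝ (Fin n)) := {x | ∀ μ ∈ L, ‖x‖ ≤ ‖x - μ‖} with hVdef
  have h1pos : (0:ℝ) < |(h₁:ℝ)| := abs_pos.2 (Int.cast_ne_zero.2 hh₁)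
  have h2pos : (0:ℝ) < |(h₂:ℝ)| := abs_pos.2 (Int.cast_ne_zero.2 hh₂)
  set sv : ℝ := |(h₁:ℝ)| + |(h₂:ℝ)| with hsv
  have hsvpos : (0:ℝ) < sv := by positivity
  set a : ℝ := 2 / sv with ha
  have hapos : (0:ℝ) < a := by positivity
  -- convexity of the Voronoi region
  have hVconv : Convex ℝ V := by
    have hVeq : V = ⋂ μ ∈ (L : Set (EuclideanSpace ℝ (Fin n))),
        {x : EuclideanSpace ℝ (Fin n) | ⟪x, μ⟫ ≤ ‖μ‖ ^ 2 / 2} := by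
      ext x
      simp only [hVdef, Set.mem_setOf_eq, Set.mem_iInter, SetLike.mem_coe]
      refine forall₂_congr fun μ hμ => ?_
      constructor
      · intro h
        nlinarith [norm_sub_sq_real x μ, norm_nonneg x, norm_nonneg (x - μ)]
      · intro h
        nlinarith [norm_sub_sq_real x μ, norm_nonneg x, norm_nonneg (x - μ)]
    rw [hVeq]
    exact convex_iInter₂ fun μ _ =>
      convex_halfSpace_le
        ⟨fun x y => inner_add_left x y μ, fun c x => real_inner_smul_left x μ c⟩ _
  -- symmetry of the Voronoi region
  have hVsymm : ∀ y ∈ V, -y ∈ V := by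
    intro y hy μ hμ
    have h := hy (-μ) (neg_mem hμ)
    calc ‖-y‖ = ‖y‖ := norm_neg y
      _ ≤ ‖y - -μ‖ := h
      _ = ‖-y - μ‖ := by rw [← norm_neg (y - -μ)]; congr 1; abel
  -- the lattice point m
  set m : EuclideanSpace ℝ (Fin n) := (|h₂| : ℤ) • (l₁ : EuclideanSpace ℝ (Fin n))
      - (|h₁| : ℤ) • l₂ with hmdef
  have hmL : m ∈ L := sub_mem (zsmul_mem hl₁ _) (zsmul_mem (hle hl₂) _)
  have hmL' : m ∉ L' := by
    intro hmem
    have h2l : (|h₂| : ℤ) • l₁ ∈ L' := by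
      have h' : m + (|h₁| : ℤ) • l₂ ∈ L' := add_mem hmem (zsmul_mem hl₂ _)
      rw [hmdef, sub_add_cancel] at h'
      exact h'
    have hfin : h₂ • l₁ ∈ L' := by
      rcases abs_choice h₂ with h | h
      · rwa [h] at h2l
      · rw [h] at h2l
        have := neg_mem h2l
        rwa [neg_smul, neg_neg] at this
    exact horder l₁ hl₁ hl₁' hfin
  have hm0 : m ≠ 0 := fun h => hmL' (h ▸ zero_mem L')
  have hmnormpos : (0:ℝ) < ‖m‖ := norm_pos_iff.2 hm0
  -- key algebraic identity
  have key : |(h₂:ℝ)| • t₁ - |(h₁:ℝ)| • t₂ = |(h₂:ℝ)| • (l₁ : EuclideanSpace ℝ (Fin n))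
      - |(h₁:ℝ)| • (l₂ : EuclideanSpace ℝ (Fin n)) := by
    have h := congrArg (fun v : EuclideanSpace ℝ (Fin n) => (|(h₁:ℝ)| * |(h₂:ℝ)|) • v) heq
    simp only [smul_smul] at h
    rw [show |(h₁:ℝ)| * |(h₂:ℝ)| * |(h₁:ℝ)|⁻¹ = |(h₂:ℝ)| by field_simp,
        show |(h₁:ℝ)| * |(h₂:ℝ)| * |(h₂:ℝ)|⁻¹ = |(h₁:ℝ)| by field_simp] at h
    rw [smul_sub, smul_sub] at h
    rw [sub_eq_sub_iff_sub_eq_sub] at h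
    exact h
  have hmreal : m = |(h₂:ℝ)| • (l₁ : EuclideanSpace ℝ (Fin n)) - |(h₁:ℝ)| • l₂ := by
    rw [hmdef, ← Int.cast_abs, ← Int.cast_abs,
      Int.cast_smul_eq_zsmul ℝ, Int.cast_smul_eq_zsmul ℝ]
  -- -t₂ ∈ interior (a • V)
  have hnt₂ : -t₂ ∈ interior (a • V) := by
    have hopen : IsOpen (-(interior (a • V))) := isOpen_interior.neg
    have hsub : -(interior (a • V)) ⊆ a • V := by
      intro x hx
      obtain ⟨y, hy, hxy⟩ := interior_subset (Set.mem_neg.mp hx)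
      exact ⟨-y, hVsymm y hy, show a • -y = x by
        rw [smul_neg, show a • y = -x from hxy, neg_neg]⟩
    exact interior_maximal hsub hopen (Set.neg_mem_neg.2 ht₂)
  -- convex combination
  have hconvI : Convex ℝ (interior (a • V)) := (hVconv.smul a).interior
  have hw₁ : (0:ℝ) ≤ |(h₂:ℝ)| / sv := by positivity
  have hw₂ : (0:ℝ) ≤ |(h₁:ℝ)| / sv := by positivity
  have hwsum : |(h₂:ℝ)| / sv + |(h₁:ℝ)| / sv = 1 := by
    rw [hsv]; field_simp; ring
  have hz : (|(h₂:ℝ)| / sv) • t₁ + (|(h₁:ℝ)| / sv) • (-t₂) ∈ interior (a • V) :=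
    hconvI ht₁ hnt₂ hw₁ hw₂ hwsum
  have hzeq : (|(h₂:ℝ)| / sv) • t₁ + (|(h₁:ℝ)| / sv) • (-t₂) = a • ((2:ℝ)⁻¹ • m) := by
    rw [hmreal]
    calc (|(h₂:ℝ)| / sv) • t₁ + (|(h₁:ℝ)| / sv) • (-t₂)
        = sv⁻¹ • (|(h₂:ℝ)| • t₁ - |(h₁:ℝ)| • t₂) := by
          match_scalars <;> field_simp
      _ = sv⁻¹ • (|(h₂:ℝ)| • (l₁ : EuclideanSpace ℝ (Fin n)) - |(h₁:ℝ)| • l₂) := by rw [key]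
      _ = a • ((2:ℝ)⁻¹ • (|(h₂:ℝ)| • (l₁ : EuclideanSpace ℝ (Fin n)) - |(h₁:ℝ)| • l₂)) := by
          rw [ha]; match_scalars <;> field_simp <;> ring
  rw [hzeq] at hz
  -- deduce (1/2) • m ∈ interior V
  have hhalf : (2:ℝ)⁻¹ • m ∈ interior V := by
    rw [interior_smul₀ hapos.ne' V] at hz
    exact (Set.smul_mem_smul_set_iff₀ hapos.ne' _ _).mp hz
  -- push slightly beyond the boundary
  obtain ⟨ε, hεpos, hball⟩ := Metric.isOpen_iff.mp isOpen_interior _ hhalf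
  set δ : ℝ := min (ε / (2 * (‖m‖ + 1))) 4⁻¹ with hδdef
  have hδpos : 0 < δ := by
    apply lt_min
    · positivity
    · norm_num
  have hδle : δ ≤ 4⁻¹ := min_le_right _ _
  have hp : ((2:ℝ)⁻¹ + δ) • m ∈ interior V := by
    apply hball
    rw [Metric.mem_ball]
    have : ((2:ℝ)⁻¹ + δ) • m - (2:ℝ)⁻¹ • m = δ • m := by
      rw [add_smul]; abel
    rw [dist_eq_norm, this, norm_smul, Real.norm_eq_abs, abs_of_pos hδpos]
    have h1 : δ ≤ ε / (2 * (‖m‖ + 1)) := min_le_left _ _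
    have h2 : δ * ‖m‖ ≤ ε / (2 * (‖m‖ + 1)) * ‖m‖ :=
      mul_le_mul_of_nonneg_right h1 (norm_nonneg m)
    have h3 : ε / (2 * (‖m‖ + 1)) * ‖m‖ < ε := by
      rw [div_mul_eq_mul_div, div_lt_iff₀ (by positivity)]
      exact mul_lt_mul_of_pos_left (by linarith [norm_nonneg m]) hεpos
    linarith
  have hpV : ((2:ℝ)⁻¹ + δ) • m ∈ V := interior_subset hp
  have hcontra := hpV m hmL
  have hn1 : ‖((2:ℝ)⁻¹ + δ) • m‖ = ((2:ℝ)⁻¹ + δ) * ‖m‖ := by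
    rw [norm_smul, Real.norm_eq_abs, abs_of_pos (by linarith)]
  have hn2 : ‖((2:ℝ)⁻¹ + δ) • m - m‖ = ((2:ℝ)⁻¹ - δ) * ‖m‖ := by
    have : ((2:ℝ)⁻¹ + δ) • m - m = (δ - (2:ℝ)⁻¹) • m := by module
    rw [this, norm_smul, Real.norm_eq_abs, abs_of_neg (by linarith), neg_sub]
  rw [hn1, hn2] at hcontra
  nlinarith [mul_pos hδpos hmnormpos]
end

section
/- Let S be a countable set, let I be a finite nonempty index set of cardinality M, and let 0 ≤ ε < 1. Suppose q : S → [0, ∞) and, for each i ∈ I, p_i : S → [0, ∞) is a probability mass function (Σ_{w∈S} p_i(w) = 1) satisfying the pointwise sandwich bounds ((1−ε)/(1+ε))·q(w) ≤ p_i(w) ≤ ((1+ε)/(1−ε))·q(w) for all w ∈ S. Let p̄(w) = (1/M)·Σ_{i∈I} p_i(w). Then for every i ∈ I, the variational distance satisfies Σ_{w∈S} |p_i(w) − p̄(w)| ≤ 4ε/(1−ε)². In particular, if ε < 1/2, then Σ_{w∈S} |p_i(w) − p̄(w)| ≤ 16ε. -/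
/-- Let `S` be a countable set, `I` a finite nonempty index set of
cardinality `M`, and `0 ≤ ε < 1`. Suppose `q : S → [0,∞)` and each `p i : S → [0,∞)` is a pmf
satisfying the pointwise sandwich bounds
`((1−ε)/(1+ε))·q(w) ≤ p i w ≤ ((1+ε)/(1−ε))·q(w)`. With `p̄(w) = (1/M)·Σ_i p i w`, for every
`i` the variational distance satisfies `Σ_w |p i w − p̄ w| ≤ 4ε/(1−ε)²`; in particular, if
`ε < 1/2` then `Σ_w |p i w − p̄ w| ≤ 16ε`. -/
theorem stmt_15 {S : Type*} [Countable S] {I : Type*} [Fintype I] [Nonempty I]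
    (ε : ℝ) (hε0 : 0 ≤ ε) (hε1 : ε < 1)
    (q : S → ℝ) (hq : ∀ w, 0 ≤ q w)
    (p : I → S → ℝ) (hp : ∀ i w, 0 ≤ p i w)
    (hpmf : ∀ i, ∑' w, p i w = 1)
    (hlow : ∀ i w, ((1 - ε) / (1 + ε)) * q w ≤ p i w)
    (hhigh : ∀ i w, p i w ≤ ((1 + ε) / (1 - ε)) * q w) :
    (∀ i, (∑' w, |p i w - (1 / (Fintype.card I : ℝ)) * ∑ j, p j w|) ≤ 4 * ε / (1 - ε) ^ 2) ∧
      (ε < 1 / 2 →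
        ∀ i, (∑' w, |p i w - (1 / (Fintype.card I : ℝ)) * ∑ j, p j w|) ≤ 16 * ε) := by
  have h1e : (0:ℝ) < 1 - ε := by linarith
  have h1e' : (0:ℝ) < 1 + ε := by linarith
  have hM : (0:ℝ) < (Fintype.card I : ℝ) := by
    exact_mod_cast Fintype.card_pos
  set c : ℝ := 4 * ε / ((1 - ε) * (1 + ε)) with hc
  have hc0 : 0 ≤ c := by positivity
  -- summability of each p i
  have hps : ∀ i, Summable (p i) := by
    intro i
    by_contra h
    have := hpmf i
    rw [tsum_eq_zero_of_not_summable h] at this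
    norm_num at this
  obtain ⟨i₀⟩ := ‹Nonempty I›
  -- q is summable and has small sum
  have hqle : ∀ w, q w ≤ ((1 + ε) / (1 - ε)) * p i₀ w := by
    intro w
    have := hlow i₀ w
    rw [div_mul_eq_mul_div, div_le_iff₀ h1e'] at this
    rw [div_mul_eq_mul_div, le_div_iff₀ h1e]
    nlinarith
  have hqsum : Summable q :=
    Summable.of_nonneg_of_le hq hqle ((hps i₀).mul_left _)
  have hqts : ∑' w, q w ≤ (1 + ε) / (1 - ε) := by
    calc ∑' w, q w ≤ ∑' w, ((1 + ε) / (1 - ε)) * p i₀ w :=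
          Summable.tsum_le_tsum hqle hqsum ((hps i₀).mul_left _)
      _ = (1 + ε) / (1 - ε) := by rw [tsum_mul_left, hpmf i₀, mul_one]
  -- pointwise key bound
  have hdiff : ∀ i j w, |p i w - p j w| ≤ c * q w := by
    intro i j w
    rw [abs_sub_le_iff]
    have l1 := hlow i w; have l2 := hlow j w
    have h1 := hhigh i w; have h2 := hhigh j w
    have key : (1 + ε) / (1 - ε) - (1 - ε) / (1 + ε) = c := by
      rw [hc, div_sub_div _ _ h1e.ne' h1e'.ne']
      congr 1 <;> ring
    have hcq : c * q w = ((1 + ε) / (1 - ε)) * q w - ((1 - ε) / (1 + ε)) * q w := by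
      rw [← key]; ring
    constructor <;> rw [hcq] <;> linarith
  have hkey : ∀ i w, |p i w - (1 / (Fintype.card I : ℝ)) * ∑ j, p j w| ≤ c * q w := by
    intro i w
    have heq : p i w - (1 / (Fintype.card I : ℝ)) * ∑ j, p j w
        = (1 / (Fintype.card I : ℝ)) * ∑ j, (p i w - p j w) := by
      rw [Finset.sum_sub_distrib, Finset.sum_const, Finset.card_univ, nsmul_eq_mul, mul_sub]
      field_simp
    rw [heq, abs_mul, abs_of_pos (by positivity : (0:ℝ) < 1 / (Fintype.card I : ℝ))]
    calc (1 / (Fintype.card I : ℝ)) * |∑ j, (p i w - p j w)|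
        ≤ (1 / (Fintype.card I : ℝ)) * ∑ j, |p i w - p j w| := by
          gcongr
          exact Finset.abs_sum_le_sum_abs _ _
      _ ≤ (1 / (Fintype.card I : ℝ)) * ∑ _j : I, c * q w := by
          gcongr with j
          exact hdiff i j w
      _ = c * q w := by
          rw [Finset.sum_const, Finset.card_univ, nsmul_eq_mul]
          field_simp
  have hmain : ∀ i, (∑' w, |p i w - (1 / (Fintype.card I : ℝ)) * ∑ j, p j w|)
      ≤ 4 * ε / (1 - ε) ^ 2 := by
    intro i
    have hsum : Summable (fun w => |p i w - (1 / (Fintype.card I : ℝ)) * ∑ j, p j w|) :=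
      Summable.of_nonneg_of_le (fun w => abs_nonneg _) (hkey i) (hqsum.mul_left c)
    calc (∑' w, |p i w - (1 / (Fintype.card I : ℝ)) * ∑ j, p j w|)
        ≤ ∑' w, c * q w := Summable.tsum_le_tsum (hkey i) hsum (hqsum.mul_left c)
      _ = c * ∑' w, q w := tsum_mul_left
      _ ≤ c * ((1 + ε) / (1 - ε)) := by gcongr
      _ = 4 * ε / (1 - ε) ^ 2 := by
          rw [hc, div_mul_div_comm, div_eq_div_iff (by positivity) (by positivity)]
          ring
  refine ⟨hmain, fun hhalf i => le_trans (hmain i) ?_⟩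
  rw [div_le_iff₀ (by positivity)]
  have h0 : (0:ℝ) ≤ ε * (1 - 2*ε) * (3 - 2*ε) := by
    apply mul_nonneg (mul_nonneg hε0 (by linarith)) (by linarith)
  nlinarith [h0]
end
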